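/- For every odd integer n ≥ 7 with n ≡ 1 (mod 3), the cycle graph C_n satisfies ζ(C_n) = (n − 1)(n − 4)/3 + ⌈2(n − 5)/3⌉ + 1. -/

import Mathlib

open SimpleGraph

/-- A proper vertex colouring of `G` using exactly `χ(G)` colours. -/
def IsChromaticColoring {V : Type*} (G : SimpleGraph V) (c : V → ℕ) : Prop :=
  (∀ u v, G.Adj u v → c u ≠ c v) ∧ ((Set.range c).ncard : ℕ∞) = G.chromaticNumber

/-- The set of chromatic completion edges for a colouring `c`: unordered pairs of
distinct non-adjacent vertices with different colours. -/
def completionEdges {V : Type*} (G : SimpleGraph V) (c : V → ℕ) : Set (Sym2 V) :=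
  {e | ∃ u v, e = s(u, v) ∧ u ≠ v ∧ ¬ G.Adj u v ∧ c u ≠ c v}

/-- The chromatic completion number `ζ(G)`. -/
noncomputable def zeta {V : Type*} (G : SimpleGraph V) : ℕ :=
  sSup {m | ∃ c : V → ℕ, IsChromaticColoring G c ∧ m = (completionEdges G c).ncard}

/-!
For a proper colouring `c` of a finite graph `G` on `N` vertices with colour classes of sizes
`a_j`, the ordered pairs of vertices split into pairs of equal colour, adjacent pairs, and pairs
spanning a completion edge, so `2 ζ_c + 2 |E(G)| + ∑ a_j ^ 2 = N ^ 2`. For `C_n` we have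
`|E| = n`, and a chromatic colouring has three classes. Since `n ≡ 1 (mod 3)`, Cauchy–Schwarz
together with a congruence gives `3 ∑ a_j ^ 2 ≥ n ^ 2 + 2`. Equality holds for classes of sizes
`k, k + 1, k` (where `n = 3k + 1`), which are realised by colouring `i ↦ i % 3` and recolouring
the last vertex with `1`.
-/

open Finset

lemma sq_sum_add_two_le_three_mul_sum_sq {ι : Type*} {s : Finset ι} (f : ι → ℕ) (hs : #s = 3)
    (h : (∑ i ∈ s, f i) % 3 = 1) :
    (∑ i ∈ s, f i) ^ 2 + 2 ≤ 3 * ∑ i ∈ s, f i ^ 2 := by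
  have hCS : (∑ i ∈ s, f i) ^ 2 ≤ #s * ∑ i ∈ s, f i ^ 2 := sq_sum_le_card_mul_sum_sq
  have hmod : (∑ i ∈ s, f i) ^ 2 % 3 = 1 := by rw [Nat.pow_mod, h]
  rw [hs] at hCS
  omega

section Coloring

variable {V : Type*} (G : SimpleGraph V) (c : V → ℕ)

lemma completionEdges_eq_edgeSet_sdiff :
    completionEdges G c = ((⊤ : SimpleGraph ℕ).comap c \ G).edgeSet := by
  ext e
  induction e using Sym2.ind with
  | _ u v =>
    simp only [completionEdges, Set.mem_ofPred_eq, mem_edgeSet, sdiff_adj, comap_adj, top_adj,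
      Sym2.eq_iff]
    constructor
    · rintro ⟨a, b, ⟨rfl, rfl⟩ | ⟨rfl, rfl⟩, -, hG, hc⟩
      · exact ⟨hc, hG⟩
      · exact ⟨Ne.symm hc, fun h => hG h.symm⟩
    · rintro ⟨hc, hG⟩
      exact ⟨u, v, Or.inl ⟨rfl, rfl⟩, fun h => hc (congrArg c h), hG, hc⟩

variable {G c} [Fintype V]

lemma ncard_completionEdges_add_ncard_edgeSet (hc : ∀ u v, G.Adj u v → c u ≠ c v) :
    (completionEdges G c).ncard + G.edgeSet.ncard =
      ((⊤ : SimpleGraph ℕ).comap c).edgeSet.ncard := by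
  rw [completionEdges_eq_edgeSet_sdiff, edgeSet_sdiff,
    Set.ncard_sdiff_add_ncard_of_subset (edgeSet_mono fun u v => hc u v)]

variable (c) in
lemma two_mul_ncard_edgeSet_comap_top_add_sum_card_fiber :
    2 * ((⊤ : SimpleGraph ℕ).comap c).edgeSet.ncard + ∑ u, #{v | c v = c u} =
      Fintype.card V ^ 2 := by
  classical
  rw [← coe_edgeFinset, Set.ncard_coe_finset, ← sum_degrees_eq_twice_card_edges,
    ← sum_add_distrib, sq, ← card_univ, ← smul_eq_mul, ← sum_const]
  refine sum_congr rfl fun u _ => ?_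
  rw [← card_neighborFinset_eq_degree, neighborFinset_eq_filter]
  simp only [comap_adj, top_adj]
  rw [add_comm, ← card_filter_add_card_filter_not (s := univ) (fun v => c v = c u)]
  simp only [ne_comm, ne_eq]

lemma two_mul_ncard_completionEdges_add (hc : ∀ u v, G.Adj u v → c u ≠ c v) :
    2 * (completionEdges G c).ncard + 2 * G.edgeSet.ncard + ∑ u, #{v | c v = c u} =
      Fintype.card V ^ 2 := by
  rw [← two_mul_ncard_edgeSet_comap_top_add_sum_card_fiber c,
    ← ncard_completionEdges_add_ncard_edgeSet hc]
  ring

variable (c) in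
lemma sum_card_fiber_eq_sum_sq :
    ∑ u, #{v | c v = c u} = ∑ j ∈ univ.image c, #{v | c v = j} ^ 2 := by
  rw [sum_comp (fun j => #{v | c v = j}) c]
  simp only [smul_eq_mul, sq]

lemma card_sq_add_two_le_three_mul_sum_card_fiber (hc : (Set.range c).ncard = 3)
    (hV : Fintype.card V % 3 = 1) :
    Fintype.card V ^ 2 + 2 ≤ 3 * ∑ u, #{v | c v = c u} := by
  have himage : #(univ.image c) = 3 := by
    rwa [← Set.ncard_coe_finset, coe_image, coe_univ, Set.image_univ]
  rw [← card_univ, card_eq_sum_card_image c univ] at hV ⊢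
  rw [sum_card_fiber_eq_sum_sq]
  exact sq_sum_add_two_le_three_mul_sum_sq _ himage hV

end Coloring

lemma ncard_edgeSet_cycleGraph {n : ℕ} (hn : 3 ≤ n) : (cycleGraph n).edgeSet.ncard = n := by
  obtain ⟨m, rfl⟩ : ∃ m, n = m + 3 := ⟨n - 3, by omega⟩
  classical
  have hsum := sum_degrees_eq_twice_card_edges (cycleGraph (m + 3))
  simp only [cycleGraph_degree_three_le, sum_const, card_univ, Fintype.card_fin,
    smul_eq_mul] at hsum
  rw [← coe_edgeFinset, Set.ncard_coe_finset]
  omega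

lemma two_mul_ncard_completionEdges_cycleGraph_add {n : ℕ} (hn : 3 ≤ n) {c : Fin n → ℕ}
    (hc : ∀ u v, (cycleGraph n).Adj u v → c u ≠ c v) :
    2 * (completionEdges (cycleGraph n) c).ncard + 2 * n + ∑ u, #{v | c v = c u} = n ^ 2 := by
  simpa [ncard_edgeSet_cycleGraph hn] using two_mul_ncard_completionEdges_add hc

def balancedCycleColoring (n : ℕ) (i : Fin n) : ℕ := if (i : ℕ) + 1 = n then 1 else i % 3

lemma balancedCycleColoring_ne_of_adj {n : ℕ} (hn : n % 3 = 1) (u v : Fin n)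
    (huv : (cycleGraph n).Adj u v) : balancedCycleColoring n u ≠ balancedCycleColoring n v := by
  have of_sub_eq_one : ∀ u v : Fin n, (u - v : Fin n).val = 1 →
      balancedCycleColoring n u ≠ balancedCycleColoring n v := by
    intro u v h
    have := u.isLt
    unfold balancedCycleColoring
    rcases le_or_gt v u with hvu | hvu
    · rw [Fin.coe_sub_iff_le.mpr hvu] at h
      split_ifs <;> omega
    · rw [Fin.coe_sub_iff_lt.mpr hvu] at h
      rw [Fin.lt_def] at hvu
      split_ifs <;> omega
  rcases cycleGraph_adj'.mp huv with h | h
  · exact of_sub_eq_one u v h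
  · exact (of_sub_eq_one v u h).symm

lemma range_balancedCycleColoring {n : ℕ} (hn : 4 ≤ n) :
    Set.range (balancedCycleColoring n) = {0, 1, 2} := by
  ext j
  simp only [Set.mem_range, Set.mem_insert_iff, Set.mem_singleton_iff, balancedCycleColoring]
  constructor
  · rintro ⟨i, rfl⟩
    split_ifs <;> omega
  · intro hj
    refine ⟨⟨j, by omega⟩, ?_⟩
    dsimp only
    split_ifs <;> omega

lemma card_fiber_balancedCycleColoring (k : ℕ) {r : ℕ} (hr : r < 3) :
    #{i | balancedCycleColoring (3 * k + 1) i = r} = k + if r = 1 then 1 else 0 := by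
  have hinit (i : Fin (3 * k)) : balancedCycleColoring (3 * k + 1) i.castSucc = i % 3 :=
    if_neg (by simpa using i.isLt.ne)
  have hlast : balancedCycleColoring (3 * k + 1) (Fin.last _) = 1 := if_pos rfl
  have hcount : Nat.count (· % 3 = r) (3 * k) = k := by
    have := Nat.count_modEq_card (3 * k) three_pos r
    simpa [Nat.ModEq, Nat.mod_eq_of_lt hr] using this
  rw [card_filter, Fin.sum_univ_castSucc]
  simp only [hinit, hlast]
  rw [Fin.sum_univ_eq_sum_range (fun i => if i % 3 = r then 1 else 0), ← card_filter,
    ← Nat.count_eq_card_filter_range, hcount]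
  simp only [eq_comm]

lemma three_mul_sum_card_fiber_balancedCycleColoring {n : ℕ} (hn : 4 ≤ n) (hmod : n % 3 = 1) :
    3 * ∑ u, #{v | balancedCycleColoring n v = balancedCycleColoring n u} = n ^ 2 + 2 := by
  obtain ⟨k, rfl⟩ : ∃ k, n = 3 * k + 1 := ⟨n / 3, by omega⟩
  have himage : univ.image (balancedCycleColoring (3 * k + 1)) = {0, 1, 2} := by
    apply coe_injective
    rw [coe_image, coe_univ, Set.image_univ, range_balancedCycleColoring hn]
    simp
  rw [sum_card_fiber_eq_sum_sq, himage, sum_insert (by decide), sum_insert (by decide),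
    sum_singleton, card_fiber_balancedCycleColoring k (r := 0) (by norm_num),
    card_fiber_balancedCycleColoring k (r := 1) (by norm_num),
    card_fiber_balancedCycleColoring k (r := 2) (by norm_num)]
  norm_num
  ring

/-- For odd `n ≥ 7` with `n ≡ 1 (mod 3)`,
`ζ(C_n) = (n-1)(n-4)/3 + ⌈2(n-5)/3⌉ + 1`. -/
theorem zeta_cycle_odd_one_mod_three (n : ℕ) (hn : 7 ≤ n) (hodd : Odd n)
    (hmod : n % 3 = 1) :
    zeta (cycleGraph n) = (n - 1) * (n - 4) / 3 + (2 * (n - 5) + 2) / 3 + 1 := by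
  have hχ : (cycleGraph n).chromaticNumber = 3 :=
    chromaticNumber_cycleGraph_of_odd n (by omega) hodd
  have hvalue : 3 * ((n - 1) * (n - 4) / 3 + (2 * (n - 5) + 2) / 3 + 1) + 3 * n + 1 = n ^ 2 := by
    obtain ⟨j, rfl⟩ : ∃ j, n = 3 * j + 7 := ⟨(n - 7) / 3, by omega⟩
    have hprod : (3 * j + 7 - 1) * (3 * j + 7 - 4) = 3 * ((j + 2) * (3 * j + 3)) := by
      rw [show 3 * j + 7 - 1 = 3 * (j + 2) by omega, show 3 * j + 7 - 4 = 3 * j + 3 by omega]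
      ring
    rw [hprod, Nat.mul_div_cancel_left _ three_pos,
      show (2 * (3 * j + 7 - 5) + 2) / 3 = 2 * j + 2 by omega]
    ring
  have hproper := balancedCycleColoring_ne_of_adj hmod
  refine IsGreatest.csSup_eq ⟨⟨balancedCycleColoring n, ⟨hproper, ?_⟩, ?_⟩, ?_⟩
  · rw [hχ, range_balancedCycleColoring (by omega)]
    simp
  · have hcount := two_mul_ncard_completionEdges_cycleGraph_add (by omega) hproper
    have hfiber := three_mul_sum_card_fiber_balancedCycleColoring (by omega) hmod
    linarith
  · rintro _ ⟨c, ⟨hc, hrange⟩, rfl⟩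
    have hcount := two_mul_ncard_completionEdges_cycleGraph_add (by omega) hc
    have hfiber : n ^ 2 + 2 ≤ 3 * ∑ u, #{v | c v = c u} := by
      simpa using card_sq_add_two_le_three_mul_sum_card_fiber (c := c)
        (by exact_mod_cast hrange.trans hχ) (by simpa using hmod)
    linarith
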